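/- arXiv:2205.06796 — 2 statements merged into one kernel-verified Lean document; each statement's English description precedes it below -/
import Mathlib

section
/- On CFK^∞(11n_57), the Sarkar map σ := Id + U^{-1}(Φ∘Ψ) satisfies σ(d) = d + b, σ(j) = j + i, σ(p) = p + n, and σ(y) = y for every other generator y in {a, b, c, e, f, g, h, i, k, l, m, n, o, q}. -/
/- STATEMENT 7: on CFK^∞(11n_57), the Sarkar map σ = Id + U⁻¹(Φ∘Ψ) satisfies
σ(d) = d + b, σ(j) = j + i, σ(p) = p + n, and σ(y) = y for every other
generator y ∈ {a, b, c, e, f, g, h, i, k, l, m, n, o, q}. -/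

open LaurentPolynomial

noncomputable section

/-- F2[U, U⁻¹] -/
abbrev L2 : Type := LaurentPolynomial (ZMod 2)

/-- the variable U = T 1 -/
def UL : L2 := T 1

/-- the i-th free generator -/
def gen {n : ℕ} (i : Fin n) : Fin n → L2 := Pi.single i 1

/-- the F2[U,U⁻¹]-linear map sending the i-th generator to `v i` -/
def mkL {n : ℕ} (v : Fin n → (Fin n → L2)) : (Fin n → L2) →ₗ[L2] (Fin n → L2) :=
  (Pi.basisFun L2 (Fin n)).constr ℕ v

/- generators of CFK^∞(11n_57):
   a = 0, b = 1, c = 2, d = 3, e = 4, f = 5, g = 6, h = 7, i = 8, j = 9,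
   k = 10, l = 11, m = 12, n = 13, o = 14, p = 15, q = 16 -/

/-- the differential of CFK^∞(11n_57) -/
def d : (Fin 17 → L2) →ₗ[L2] (Fin 17 → L2) :=
  mkL ![gen 1,                       -- ∂a = b
        0, 0,                        -- ∂b = ∂c = 0
        UL • gen 0 + gen 5,          -- ∂d = Ua + f
        UL • gen 2 + gen 7,          -- ∂e = Uc + h
        UL • gen 1,                  -- ∂f = Ub
        gen 8,                       -- ∂g = i
        0, 0,                        -- ∂h = ∂i = 0
        UL • gen 6 + gen 10,         -- ∂j = Ug + k
        UL • gen 8,                  -- ∂k = Ui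
        gen 13,                      -- ∂l = n
        UL ^ 2 • gen 7 + gen 14,     -- ∂m = U²h + o
        0, 0,                        -- ∂n = ∂o = 0
        UL • gen 11 + gen 16,        -- ∂p = Ul + q
        UL • gen 13]                 -- ∂q = Un

/-- Φ = Σ_{p odd} ∂_{p0}: the components of ∂ lowering the first planar
coordinate by an odd amount and preserving the second (computed from the
planar bigradings a:(0,4); b,c,d:(0,3); e,f:(0,2); g:(0,1); h,i,j:(0,0);
k:(0,-1); l,m:(0,-2); n,o,p:(0,-3); q:(0,-4)). -/
def Phi : (Fin 17 → L2) →ₗ[L2] (Fin 17 → L2) :=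
  mkL ![0, 0, 0,
        UL • gen 0,        -- Φ(d) = Ua
        UL • gen 2,        -- Φ(e) = Uc
        UL • gen 1,        -- Φ(f) = Ub
        0, 0, 0,
        UL • gen 6,        -- Φ(j) = Ug
        UL • gen 8,        -- Φ(k) = Ui
        0, 0, 0, 0,
        UL • gen 11,       -- Φ(p) = Ul
        UL • gen 13]       -- Φ(q) = Un

/-- Ψ = Σ_{q odd} ∂_{0q}: the components of ∂ preserving the first planar
coordinate and lowering the second by an odd amount. -/
def Psi : (Fin 17 → L2) →ₗ[L2] (Fin 17 → L2) :=
  mkL ![gen 1,             -- Ψ(a) = b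
        0, 0,
        gen 5,             -- Ψ(d) = f
        0, 0,
        gen 8,             -- Ψ(g) = i
        0, 0,
        gen 10,            -- Ψ(j) = k
        0,
        gen 13,            -- Ψ(l) = n
        gen 14,            -- Ψ(m) = o
        0, 0,
        gen 16,            -- Ψ(p) = q
        0]

/-- the Sarkar map σ = Id + U⁻¹(Φ ∘ Ψ) -/
def sigma : (Fin 17 → L2) →ₗ[L2] (Fin 17 → L2) :=
  LinearMap.id + (T (-1) : L2) • (Phi ∘ₗ Psi)

/-! Everything is checked on the free generators. In `∂ ∘ ∂` the nonzero contributions come in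
pairs, which cancel over `F₂` (e.g. `∂∂d = Ub + Ub`). The composite `Φ ∘ Ψ` vanishes on every
generator except `d`, `j`, `p`, where `Ψ` and then `Φ` run along two sides of a square of the
complex: `d ↦ f ↦ Ub`, `j ↦ k ↦ Ui`, `p ↦ q ↦ Un`; the factor `U⁻¹` in `σ` cancels the `U`. -/

@[simp]
lemma mkL_gen {n : ℕ} (v : Fin n → Fin n → L2) (i : Fin n) : mkL v (gen i) = v i := by
  rw [mkL, gen, ← Pi.basisFun_apply, Module.Basis.constr_basis]

lemma mkL_ext {n : ℕ} {f g : (Fin n → L2) →ₗ[L2] (Fin n → L2)}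
    (h : ∀ i, f (gen i) = g (gen i)) : f = g :=
  (Pi.basisFun L2 (Fin n)).ext fun i => by rw [Pi.basisFun_apply]; exact h i

lemma add_self_eq_zero_of_zmod_two {M : Type*} [AddCommMonoid M] [Module (ZMod 2) M] (x : M) :
    x + x = 0 := by
  rw [← two_smul (ZMod 2), show (2 : ZMod 2) = 0 from rfl, zero_smul]

lemma T_neg_one_smul_UL_smul {M : Type*} [AddCommMonoid M] [Module L2 M] (x : M) :
    (T (-1) : L2) • UL • x = x := by
  rw [smul_smul, UL, ← T_add, neg_add_cancel, T_zero, one_smul]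

lemma d_comp_d : d ∘ₗ d = 0 := by
  refine mkL_ext fun i => ?_
  fin_cases i <;> simp [d, add_self_eq_zero_of_zmod_two]

lemma Phi_Psi_gen_eq_zero {i : Fin 17} (hi : i ∉ ({3, 9, 15} : Finset (Fin 17))) :
    Phi (Psi (gen i)) = 0 := by
  fin_cases i <;> simp_all [Phi, Psi]

lemma sigma_apply (x : Fin 17 → L2) : sigma x = x + (T (-1) : L2) • Phi (Psi x) := rfl

lemma sigma_eq_add_of_Phi_Psi_eq {x y : Fin 17 → L2} (h : Phi (Psi x) = UL • y) :
    sigma x = x + y := by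
  rw [sigma_apply, h, T_neg_one_smul_UL_smul]

lemma sigma_gen_eq_self {i : Fin 17} (hi : i ∉ ({3, 9, 15} : Finset (Fin 17))) :
    sigma (gen i) = gen i := by
  rw [sigma_apply, Phi_Psi_gen_eq_zero hi, smul_zero, add_zero]

theorem stmt_7 :
    -- CFK^∞(11n_57) is a chain complex
    d ∘ₗ d = 0 ∧
    -- σ(d) = d + b, σ(j) = j + i, σ(p) = p + n
    sigma (gen 3) = gen 3 + gen 1 ∧
    sigma (gen 9) = gen 9 + gen 8 ∧
    sigma (gen 15) = gen 15 + gen 13 ∧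
    -- σ(y) = y for every other generator y
    sigma (gen 0) = gen 0 ∧ sigma (gen 1) = gen 1 ∧ sigma (gen 2) = gen 2 ∧
    sigma (gen 4) = gen 4 ∧ sigma (gen 5) = gen 5 ∧ sigma (gen 6) = gen 6 ∧
    sigma (gen 7) = gen 7 ∧ sigma (gen 8) = gen 8 ∧ sigma (gen 10) = gen 10 ∧
    sigma (gen 11) = gen 11 ∧ sigma (gen 12) = gen 12 ∧
    sigma (gen 13) = gen 13 ∧ sigma (gen 14) = gen 14 ∧
    sigma (gen 16) = gen 16 := by
  refine ⟨d_comp_d, ?_, ?_, ?_, ?_, ?_, ?_, ?_, ?_, ?_, ?_, ?_, ?_, ?_, ?_, ?_, ?_, ?_⟩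
  iterate 3 exact sigma_eq_add_of_Phi_Psi_eq (by simp [Phi, Psi])
  all_goals exact sigma_gen_eq_self (by decide)
end
end

section
/- Every F2[U,U^{-1}]-linear endomorphism H of CFK^∞(11n_57) that is homogeneous of homological degree +1 (M(H(y)) = M(y) + 1 for every term of H(y)) and filtered (every term of H(y) has planar coordinates coordinatewise ≤ the planar coordinates of y) is identically zero. Consequently, any two F2[U,U^{-1}]-linear chain maps on CFK^∞(11n_57) that are chain homotopic through a filtered homotopy of homological degree +1 are equal. -/
/- STATEMENT 9: every F2[U,U⁻¹]-linear endomorphism of CFK^∞(11n_57) that is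
homogeneous of homological degree +1 and filtered is identically zero;
consequently two chain maps that are chain homotopic through a filtered
homotopy of degree +1 are equal. -/

open LaurentPolynomial

noncomputable section

/-- `x` is homogeneous of homological degree `r`: it is an F2-combination of
elements U^k·(i-th generator) with M i - 2k = r. -/
def HomogL {n : ℕ} (M : Fin n → ℤ) (r : ℤ) (x : Fin n → L2) : Prop :=
  x ∈ Submodule.span (ZMod 2)
    {v : Fin n → L2 | ∃ (i : Fin n) (k : ℤ), M i - 2 * k = r ∧ v = (T k : L2) • gen i}

/-- every term of `x` has planar coordinates coordinatewise ≤ `st`. -/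
def BelowL {n : ℕ} (P : Fin n → ℤ × ℤ) (st : ℤ × ℤ) (x : Fin n → L2) : Prop :=
  x ∈ Submodule.span (ZMod 2)
    {v : Fin n → L2 | ∃ (i : Fin n) (k : ℤ),
      (P i).1 - k ≤ st.1 ∧ (P i).2 - k ≤ st.2 ∧ v = (T k : L2) • gen i}

/-- homological gradings -/
def M : Fin 17 → ℤ :=
  ![1, 0, 0, 0, -1, -1, -1, -2, -2, -2, -3, -5, -5, -6, -6, -6, -7]

/-- planar bigradings -/
def P : Fin 17 → ℤ × ℤ :=
  ![(0, 4), (0, 3), (0, 3), (0, 3), (0, 2), (0, 2), (0, 1), (0, 0), (0, 0),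
    (0, 0), (0, -1), (0, -2), (0, -2), (0, -3), (0, -3), (0, -3), (0, -4)]


/-- auxiliary: all first planar coordinates vanish -/
lemma aux_P1_zero : ∀ j : Fin 17, (P j).1 = 0 := by decide

/-- auxiliary: the combined grading/filtration constraint is unsatisfiable -/
lemma aux_key : ∀ i j : Fin 17, (M j - M i - 1 < 0) ∨ (M j - M i - 1) % 2 = 1 ∨
    (P i).2 < (P j).2 - (M j - M i - 1) / 2 := by decide

/-- auxiliary: coefficients of span elements inherit coefficient constraints -/
lemma aux_coeff_of_mem_span {n : ℕ} {Q : Fin n → ℤ → Prop} {S : Set (Fin n → L2)}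
    (hS : ∀ v ∈ S, ∀ (j : Fin n) (k : ℤ), (v j).coeff k ≠ 0 → Q j k) {x : Fin n → L2}
    (hx : x ∈ Submodule.span (ZMod 2) S) : ∀ (j : Fin n) (k : ℤ), (x j).coeff k ≠ 0 → Q j k := by
  induction hx using Submodule.span_induction with
  | mem v hv => exact hS v hv
  | zero => intro j k h; simp at h
  | add a b _ _ ha hb =>
      intro j k h
      by_cases h1 : (a j).coeff k = 0
      · refine hb j k ?_
        intro h2
        apply h
        show (a j).coeff k + (b j).coeff k = 0
        rw [h1, h2, add_zero]
      · exact ha j k h1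
  | smul c a _ ha =>
      intro j k h
      refine ha j k ?_
      intro h0
      apply h
      show c • (a j).coeff k = 0
      rw [h0, smul_zero]

/-- auxiliary: coefficients of a scaled generator -/
lemma aux_gen_coeff {n : ℕ} (i : Fin n) (k : ℤ) (j : Fin n) (k' : ℤ)
    (h : (((T k : L2) • gen i) j).coeff k' ≠ 0) : j = i ∧ k' = k := by
  by_cases hji : j = i
  · subst hji
    refine ⟨rfl, ?_⟩
    have he : ((T k : L2) • gen j) j = T k := by
      simp [gen, Pi.single_apply, smul_eq_mul]
    rw [he, T_apply] at h
    by_contra hk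
    simp [Ne.symm hk] at h
  · exfalso
    apply h
    have he : ((T k : L2) • gen i) j = 0 := by
      simp [gen, Pi.single_apply, Ne.symm hji, smul_eq_mul]
    rw [he]; rfl

/-- auxiliary: every filtered degree-(+1) endomorphism is zero -/
lemma aux_H_zero (H : (Fin 17 → L2) →ₗ[L2] (Fin 17 → L2))
    (hH1 : ∀ (r : ℤ) (x : Fin 17 → L2), HomogL M r x → HomogL M (r + 1) (H x))
    (hH2 : ∀ i : Fin 17, BelowL P (P i) (H (gen i))) : H = 0 := by
  have hz : ∀ i : Fin 17, H (gen i) = 0 := by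
    intro i
    have hg : HomogL M (M i) (gen i) := by
      refine Submodule.subset_span ⟨i, 0, by ring, ?_⟩
      rw [T_zero, one_smul]
    have h1 : ∀ (j : Fin 17) (k : ℤ), ((H (gen i)) j).coeff k ≠ 0 → M j - 2 * k = M i + 1 := by
      refine aux_coeff_of_mem_span ?_ (hH1 (M i) (gen i) hg)
      rintro v ⟨i', k', hik, rfl⟩ j k hv
      obtain ⟨rfl, rfl⟩ := aux_gen_coeff i' k' j k hv
      exact hik
    have h2 : ∀ (j : Fin 17) (k : ℤ), ((H (gen i)) j).coeff k ≠ 0 →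
        (P j).1 - k ≤ (P i).1 ∧ (P j).2 - k ≤ (P i).2 := by
      refine aux_coeff_of_mem_span ?_ (hH2 i)
      rintro v ⟨i', k', ha, hb, rfl⟩ j k hv
      obtain ⟨rfl, rfl⟩ := aux_gen_coeff i' k' j k hv
      exact ⟨ha, hb⟩
    funext j
    refine LaurentPolynomial.ext fun k => ?_
    by_contra hne
    obtain ⟨ha, hb⟩ := h2 j k hne
    have hc := h1 j k hne
    have := aux_key i j
    have := aux_P1_zero i
    have := aux_P1_zero j
    omega
  apply Module.Basis.ext (Pi.basisFun L2 (Fin 17))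
  intro i
  simpa [gen, Pi.basisFun_apply] using hz i

theorem stmt_9 :
    -- every filtered degree-(+1) endomorphism is zero
    (∀ H : (Fin 17 → L2) →ₗ[L2] (Fin 17 → L2),
      (∀ (r : ℤ) (x : Fin 17 → L2), HomogL M r x → HomogL M (r + 1) (H x)) →
      (∀ i : Fin 17, BelowL P (P i) (H (gen i))) →
      H = 0) ∧
    -- consequently chain maps homotopic through such a homotopy are equal
    (∀ F G H : (Fin 17 → L2) →ₗ[L2] (Fin 17 → L2),
      F ∘ₗ d = d ∘ₗ F → G ∘ₗ d = d ∘ₗ G →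
      (∀ (r : ℤ) (x : Fin 17 → L2), HomogL M r x → HomogL M (r + 1) (H x)) →
      (∀ i : Fin 17, BelowL P (P i) (H (gen i))) →
      d ∘ₗ H + H ∘ₗ d = F + G → F = G) := by
  constructor
  · intro H hH1 hH2
    exact aux_H_zero H hH1 hH2
  · intro F G H _ _ hH1 hH2 hFG
    have hz : H = 0 := aux_H_zero H hH1 hH2
    rw [hz] at hFG
    simp only [LinearMap.comp_zero, LinearMap.zero_comp, add_zero] at hFG
    refine LinearMap.ext fun x => funext fun j => ?_
    have h0 : (0 : (Fin 17 → L2) →ₗ[L2] (Fin 17 → L2)) x j = F x j + G x j := by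
      rw [hFG]; rfl
    have h2 : F x j + F x j = 0 := by
      have := two_smul (ZMod 2) (F x j)
      have hh : (2 : ZMod 2) = 0 := rfl
      rw [hh, zero_smul] at this
      exact this.symm
    have h0' : (0 : Fin 17 → L2) j = F x j + G x j := h0
    simp only [Pi.zero_apply] at h0'
    have : F x j + (F x j + G x j) = F x j + 0 := by rw [← h0']
    rw [← add_assoc, h2, zero_add, add_zero] at this
    exact this.symm
end
end
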